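/- arXiv:1402.0039 — 3 statements merged into one kernel-verified Lean document; each statement's English description precedes it below -/
import Mathlib

section
/- (Intertwining property of the body-bar rigidity matrix.) Let Γ be a group acting on finite types V and E, let h, t : E → V be Γ-equivariant maps (h(γ·e) = γ·h(e) and t(γ·e) = γ·t(e) for all γ ∈ Γ, e ∈ E), let ι be a finite index type, let σ : Γ → O(ι, ℝ) be a group homomorphism into the real orthogonal matrices indexed by ι, and let b : E → (ι → ℝ) satisfy b(γ·e) = σ(γ) · b(e) (matrix-vector product) for all γ ∈ Γ and e ∈ E. Define the rigidity matrix R, with rows indexed by E and columns indexed by V × ι, by R(e, (v,i)) = (if v = h(e) then b(e)_i else 0) − (if v = t(e) then b(e)_i else 0). For each γ ∈ Γ define the matrix M(γ), indexed by V × ι, by M(γ)((w,j),(v,i)) = σ(γ)_{j,i} if w = γ·v and 0 otherwise (this is the Kronecker product σ(γ) ⊗ P_V(γ)), and define the permutation matrix P_E(γ), indexed by E, by P_E(γ)(e,f) = 1 if e = γ·f and 0 otherwise. Then for every γ ∈ Γ, R · M(γ) = P_E(γ) · R; that is, R is an intertwiner of the representations σ ⊗ P_V and P_E. -/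
/-!
Row `e` of the rigidity matrix is the tensor product of row `e` of the signed incidence matrix
with `b e`. Equivariance of `h` and `t` makes the incidence matrix invariant under the diagonal
action, and orthogonality gives `σ γ⁻¹ = (σ γ)ᵀ`, so `b (γ⁻¹ • e) = b e ᵥ* σ γ`. Multiplying on
the right by `σ γ ⊗ P_V(γ)` therefore sends row `e` to row `γ⁻¹ • e`, which is what `P_E(γ)`
does on the left.
-/

open Matrix

section PermutationMatrix

variable {Γ α : Type*} [Group Γ] [MulAction Γ α]

theorem Matrix.of_ite_eq_smul_mul {β R : Type*} [Fintype α] [DecidableEq α] [NonAssocSemiring R]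
    (γ : Γ) (A : Matrix α β R) :
    (of fun a a' : α => if a = γ • a' then (1 : R) else 0) * A = A.submatrix (γ⁻¹ • ·) id := by
  ext a b
  simp [mul_apply, ← inv_smul_eq_iff]

theorem Matrix.mul_of_ite_eq_smul_apply {ι m R : Type*} [Fintype α] [Fintype ι] [DecidableEq α]
    [NonUnitalNonAssocSemiring R] (A : Matrix m (α × ι) R) (S : Matrix ι ι R) (γ : Γ)
    (e : m) (v : α) (i : ι) :
    (A * of fun P Q : α × ι => if P.1 = γ • Q.1 then S P.2 Q.2 else 0) e (v, i) =
      ((fun j => A e (γ • v, j)) ᵥ* S) i := by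
  simp [mul_apply, Fintype.sum_prod_type, vecMul, dotProduct]

end PermutationMatrix

theorem smul_eq_apply_iff_of_equivariant {Γ E V : Type*} [Group Γ] [MulAction Γ E]
    [MulAction Γ V] {f : E → V} (hf : ∀ (γ : Γ) (e : E), f (γ • e) = γ • f e) (γ : Γ) (e : E)
    (v : V) : γ • v = f e ↔ v = f (γ⁻¹ • e) := by
  rw [hf, smul_eq_iff_eq_inv_smul]

theorem MonoidHom.map_inv_eq_of_mul_eq_one {Γ M : Type*} [Group Γ] [Monoid M] (σ : Γ →* M)
    {γ : Γ} {x : M} (hx : x * σ γ = 1) : σ γ⁻¹ = x :=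
  (left_inv_eq_right_inv hx (by rw [← map_mul, mul_inv_cancel, map_one])).symm

def incidenceMatrix {E V : Type*} (R : Type*) [Ring R] [DecidableEq V] (h t : E → V) :
    Matrix E V R :=
  of fun e v => (if v = h e then 1 else 0) - (if v = t e then 1 else 0)

theorem incidenceMatrix_inv_smul {Γ E V R : Type*} [Ring R] [Group Γ] [MulAction Γ E]
    [MulAction Γ V] [DecidableEq V] {h t : E → V} (hh : ∀ (γ : Γ) (e : E), h (γ • e) = γ • h e)
    (ht : ∀ (γ : Γ) (e : E), t (γ • e) = γ • t e) (γ : Γ) (e : E) (v : V) :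
    incidenceMatrix R h t (γ⁻¹ • e) v = incidenceMatrix R h t e (γ • v) := by
  simp only [incidenceMatrix, of_apply, smul_eq_apply_iff_of_equivariant hh,
    smul_eq_apply_iff_of_equivariant ht]

/-- Intertwining property of the body-bar rigidity matrix: if the edge directions `b`
are compatible with the symmetry, then the rigidity matrix `R` intertwines the
representation `σ ⊗ P_V` (on `V × ι`) and the permutation representation `P_E` (on `E`). -/
theorem rigidity_matrix_intertwiner {Γ V E ι : Type*} [Group Γ]
    [Fintype V] [Fintype E] [Fintype ι] [DecidableEq V] [DecidableEq E] [DecidableEq ι]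
    [MulAction Γ V] [MulAction Γ E]
    (h t : E → V)
    (hh : ∀ (γ : Γ) (e : E), h (γ • e) = γ • h e)
    (ht : ∀ (γ : Γ) (e : E), t (γ • e) = γ • t e)
    (σ : Γ →* Matrix ι ι ℝ) (hσ : ∀ γ : Γ, (σ γ)ᵀ * σ γ = 1)
    (b : E → ι → ℝ) (hb : ∀ (γ : Γ) (e : E), b (γ • e) = σ γ *ᵥ b e)
    (R : Matrix E (V × ι) ℝ)
    (hR : ∀ (e : E) (v : V) (i : ι),
      R e (v, i) = (if v = h e then b e i else 0) - (if v = t e then b e i else 0))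
    (γ : Γ) :
    R * (Matrix.of fun (P Q : V × ι) =>
        if P.1 = γ • Q.1 then σ γ P.2 Q.2 else 0) =
      (Matrix.of fun (e f : E) => if e = γ • f then (1 : ℝ) else 0) * R := by
  have hR_row : ∀ e v, (fun i => R e (v, i)) = incidenceMatrix ℝ h t e v • b e := by
    intro e v
    ext i
    simp only [hR, incidenceMatrix, of_apply, Pi.smul_apply, smul_eq_mul, sub_mul, ite_mul,
      one_mul, zero_mul]
  have hb_inv : ∀ e, b (γ⁻¹ • e) = b e ᵥ* σ γ := fun e => by
    rw [hb, σ.map_inv_eq_of_mul_eq_one (hσ γ), mulVec_transpose]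
  ext e ⟨v, i⟩
  rw [of_ite_eq_smul_mul, submatrix_apply, mul_of_ite_eq_smul_apply, hR_row, smul_vecMul,
    ← incidenceMatrix_inv_smul hh ht, ← hb_inv, ← hR_row]
  rfl
end

section
/- (Orbit reduction of the infinitesimal motion equations.) Let Γ be a group acting on sets V and E, let h, t : E → V be Γ-equivariant maps (h(γ·e) = γ·h(e) and t(γ·e) = γ·t(e)), let ι be a finite index type, let σ : Γ → O(ι, ℝ) be a group homomorphism into the real orthogonal matrices indexed by ι, let b : E → (ι → ℝ) satisfy b(γ·e) = σ(γ) · b(e) for all γ, e, and let χ : Γ → ℂˣ be a group homomorphism. Suppose m : V → (ι → ℂ) is χ-symmetric, i.e. m(γ·v) = χ(γ)⁻¹ · (σ(γ) · m(v)) for all γ ∈ Γ and v ∈ V, where σ(γ) acts on ℂ-valued vectors via its complexification. If for some edge e₀ ∈ E the bilinear dot product satisfies b(e₀) ⬝ (m(h(e₀)) − m(t(e₀))) = 0, then for every γ ∈ Γ also b(γ·e₀) ⬝ (m(h(γ·e₀)) − m(t(γ·e₀))) = 0. Consequently, a χ-symmetric map satisfies the motion equation for every edge of a Γ-orbit as soon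 as it satisfies it for one representative edge of that orbit. -/
open Matrix

/-!
The bilinear dot product is invariant under a matrix `A` with `Aᵀ * A = 1`, and this survives
complexification. Equivariance rewrites the data of the edge `γ • e₀` as `σ γ` applied to the
data of `e₀`, with the extra scalar `(χ γ)⁻¹` on the `m`-side, so the motion equation at `γ • e₀`
is `(χ γ)⁻¹` times the one at `e₀`.
-/

theorem Matrix.dotProduct_mulVec_mulVec_of_transpose_mul_self {n α : Type*} [Fintype n]
    [DecidableEq n] [CommSemiring α] {A : Matrix n n α} (hA : Aᵀ * A = 1) (u v : n → α) :
    (A *ᵥ u) ⬝ᵥ (A *ᵥ v) = u ⬝ᵥ v := by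
  rw [dotProduct_mulVec, vecMul_mulVec, hA, vecMul_one]

theorem Matrix.transpose_mul_self_map_eq_one {n R S : Type*} [Fintype n] [DecidableEq n]
    [CommSemiring R] [CommSemiring S] (f : R →+* S) {A : Matrix n n R} (hA : Aᵀ * A = 1) :
    (A.map f)ᵀ * A.map f = 1 := by
  rw [← transpose_map, ← Matrix.map_mul, hA, Matrix.map_one _ f.map_zero f.map_one]

/-- Orbit reduction of the infinitesimal motion equations: a `χ`-symmetric map `m`
satisfies the motion equation for every edge of a `Γ`-orbit as soon as it satisfies it
for one representative edge of that orbit. -/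
theorem motion_equation_orbit_reduction {Γ V E ι : Type*} [Group Γ] [Fintype ι]
    [MulAction Γ V] [MulAction Γ E]
    (h t : E → V)
    (hh : ∀ (γ : Γ) (e : E), h (γ • e) = γ • h e)
    (ht : ∀ (γ : Γ) (e : E), t (γ • e) = γ • t e)
    [DecidableEq ι]
    (σ : Γ →* Matrix ι ι ℝ) (hσ : ∀ γ : Γ, (σ γ)ᵀ * σ γ = 1)
    (b : E → ι → ℝ) (hb : ∀ (γ : Γ) (e : E), b (γ • e) = σ γ *ᵥ b e)
    (χ : Γ →* ℂˣ) (m : V → ι → ℂ)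
    (hm : ∀ (γ : Γ) (v : V),
      m (γ • v) = ((χ γ)⁻¹ : ℂˣ) • ((σ γ).map Complex.ofReal *ᵥ m v))
    (e₀ : E)
    (h0 : ∑ i, (b e₀ i : ℂ) * (m (h e₀) i - m (t e₀) i) = 0) :
    ∀ γ : Γ, ∑ i, (b (γ • e₀) i : ℂ) * (m (h (γ • e₀)) i - m (t (γ • e₀)) i) = 0 := by
  intro γ
  set A : Matrix ι ι ℂ := (σ γ).map Complex.ofRealHom
  have hbγ : (fun i ↦ (b (γ • e₀) i : ℂ)) = A *ᵥ fun i ↦ (b e₀ i : ℂ) := by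
    ext i
    rw [hb]
    exact RingHom.map_mulVec Complex.ofRealHom _ _ i
  have hmγ : m (h (γ • e₀)) - m (t (γ • e₀)) = (χ γ)⁻¹ • (A *ᵥ (m (h e₀) - m (t e₀))) := by
    rw [hh, ht, hm, hm, mulVec_sub, smul_sub]
    rfl
  calc (fun i ↦ (b (γ • e₀) i : ℂ)) ⬝ᵥ (m (h (γ • e₀)) - m (t (γ • e₀)))
      = (χ γ)⁻¹ • ((A *ᵥ fun i ↦ (b e₀ i : ℂ)) ⬝ᵥ (A *ᵥ (m (h e₀) - m (t e₀)))) := by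
        rw [hbγ, hmγ, dotProduct_smul]
    _ = (χ γ)⁻¹ • ((fun i ↦ (b e₀ i : ℂ)) ⬝ᵥ (m (h e₀) - m (t e₀))) := by
        rw [dotProduct_mulVec_mulVec_of_transpose_mul_self
          (transpose_mul_self_map_eq_one Complex.ofRealHom (hσ γ))]
    _ = 0 := by
        rw [show (fun i ↦ (b e₀ i : ℂ)) ⬝ᵥ (m (h e₀) - m (t e₀)) = 0 from h0, smul_zero]
end

section
/- Let n ≥ 2, let M be an invertible n×n complex matrix, let ω ∈ ℂ, and let p ∈ ℂⁿ. Then (I − ω·(M⁻¹)^(2)) · w(p, Mp) = w(p, (M + ω·M⁻¹)p), where I denotes the identity matrix indexed by the pairs (i,j) with 1 ≤ i < j ≤ n. -/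
open Matrix

/-- The second compound matrix of an `n × n` matrix `A`: rows and columns are indexed by
the pairs `(i, j)` with `i < j`, and the entry at `((i,j),(k,l))` is the determinant
`A i k * A j l - A i l * A j k` of the corresponding `2 × 2` submatrix of `A`. -/
def compound2 {R : Type*} [CommRing R] {n : ℕ} (A : Matrix (Fin n) (Fin n) R) :
    Matrix {p : Fin n × Fin n // p.1 < p.2} {p : Fin n × Fin n // p.1 < p.2} R :=
  Matrix.of fun P Q =>
    A P.1.1 Q.1.1 * A P.1.2 Q.1.2 - A P.1.1 Q.1.2 * A P.1.2 Q.1.1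

/-- The Plücker coordinates of the 2-extensor `x ∧ y`: the vector indexed by pairs
`(i, j)` with `i < j` whose `(i,j)`-entry is `x i * y j - x j * y i`. -/
def plucker {R : Type*} [CommRing R] {n : ℕ} (x y : Fin n → R) :
    {p : Fin n × Fin n // p.1 < p.2} → R :=
  fun P => x P.1.1 * y P.1.2 - x P.1.2 * y P.1.1

/-!
The second compound matrix acts on Plücker coordinates by `A⁽²⁾ w(x, y) = w(Ax, Ay)`
(Cauchy–Binet for `2 × 2` minors). Hence `(M⁻¹)⁽²⁾ w(p, Mp) = w(M⁻¹p, p) = -w(p, M⁻¹p)`, and the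
identity follows from the bilinearity of `w`.
-/

open Finset in
theorem Fintype.sum_prod_eq_sum_lt_add_swap {α M : Type*} [LinearOrder α] [Fintype α]
    [AddCommMonoid M] (f : α × α → M) (hf : ∀ a, f (a, a) = 0) :
    ∑ q, f q = ∑ q : {q : α × α // q.1 < q.2}, (f q + f q.1.swap) := by
  have hmem (q : α × α) : q ∈ univ.filter (fun q : α × α => q.1 < q.2) ↔ q.1 < q.2 := by simp
  rw [sum_add_distrib, ← sum_filter_add_sum_filter_not univ (fun q : α × α => q.1 < q.2),
    ← sum_subtype _ hmem f, ← sum_subtype _ hmem (fun q => f q.swap)]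
  congr 1
  rw [← sum_filter_of_ne (p := fun q : α × α => q.2 < q.1), filter_filter]
  · refine Finset.sum_equiv (Equiv.prodComm α α) (fun q => ?_) (fun _ _ => rfl)
    simp only [mem_filter, mem_univ, true_and, Equiv.prodComm_apply, Prod.fst_swap,
      Prod.snd_swap, not_lt]
    exact ⟨And.right, fun h => ⟨h.le, h⟩⟩
  · rintro ⟨a, b⟩ hab hne
    simp only [mem_filter, mem_univ, true_and, not_lt] at hab
    exact hab.lt_of_ne fun h => hne (h ▸ hf a)

section

variable {R : Type*} [CommRing R] {n : ℕ}

theorem plucker_mulVec_eq_sum (A : Matrix (Fin n) (Fin n) R)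
    (x y : Fin n → R) (P : {p : Fin n × Fin n // p.1 < p.2}) :
    plucker (A *ᵥ x) (A *ᵥ y) P =
      ∑ q : Fin n × Fin n, A P.1.1 q.1 * A P.1.2 q.2 * (x q.1 * y q.2 - x q.2 * y q.1) := by
  simp only [plucker, mulVec, dotProduct, Finset.sum_mul_sum, Fintype.sum_prod_type, mul_sub,
    Finset.sum_sub_distrib]
  rw [Finset.sum_comm (f := fun k l => A P.1.2 k * x k * (A P.1.1 l * y l))]
  congr 1 <;> refine Finset.sum_congr rfl fun _ _ => Finset.sum_congr rfl fun _ _ => by ring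

theorem compound2_mulVec_plucker (A : Matrix (Fin n) (Fin n) R) (x y : Fin n → R) :
    compound2 A *ᵥ plucker x y = plucker (A *ᵥ x) (A *ᵥ y) := by
  ext P
  rw [plucker_mulVec_eq_sum, Fintype.sum_prod_eq_sum_lt_add_swap _ (fun _ => by ring)]
  refine Finset.sum_congr rfl fun Q _ => ?_
  simp only [compound2, plucker, of_apply, Prod.fst_swap, Prod.snd_swap]
  ring

theorem plucker_add_right (x y z : Fin n → R) :
    plucker x (y + z) = plucker x y + plucker x z := by
  ext P; simp only [plucker, Pi.add_apply]; ring

theorem plucker_smul_right (c : R) (x y : Fin n → R) :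
    plucker x (c • y) = c • plucker x y := by
  ext P; simp only [plucker, Pi.smul_apply, smul_eq_mul]; ring

theorem plucker_swap (x y : Fin n → R) :
    plucker x y = -plucker y x := by
  ext P; simp only [plucker, Pi.neg_apply]; ring

end

theorem one_sub_smul_compound2_inv_mulVec_general (n : ℕ)
    (M : Matrix (Fin n) (Fin n) ℂ) (hM : IsUnit M.det) (ω : ℂ) (p : Fin n → ℂ) :
    (1 - ω • compound2 M⁻¹) *ᵥ plucker p (M *ᵥ p) =
      plucker p ((M + ω • M⁻¹) *ᵥ p) := by
  have hinv : M⁻¹ *ᵥ (M *ᵥ p) = p := by rw [mulVec_mulVec, nonsing_inv_mul M hM, one_mulVec]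
  calc (1 - ω • compound2 M⁻¹) *ᵥ plucker p (M *ᵥ p)
      = plucker p (M *ᵥ p) - ω • plucker (M⁻¹ *ᵥ p) p := by
        rw [sub_mulVec, one_mulVec, smul_mulVec, compound2_mulVec_plucker, hinv]
    _ = plucker p (M *ᵥ p + ω • M⁻¹ *ᵥ p) := by
        rw [plucker_swap (M⁻¹ *ᵥ p), plucker_add_right, plucker_smul_right, smul_neg,
          sub_neg_eq_add]
    _ = plucker p ((M + ω • M⁻¹) *ᵥ p) := by rw [add_mulVec, smul_mulVec]

theorem one_sub_smul_compound2_inv_mulVec (n : ℕ) (hn : 2 ≤ n)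
    (M : Matrix (Fin n) (Fin n) ℂ) (hM : IsUnit M.det) (ω : ℂ) (p : Fin n → ℂ) :
    (1 - ω • compound2 M⁻¹) *ᵥ plucker p (M *ᵥ p) =
      plucker p ((M + ω • M⁻¹) *ᵥ p) :=
  one_sub_smul_compound2_inv_mulVec_general n M hM ω p
end
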